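/- Let A be a Z-graded algebra over a commutative ring K and d an integer. Given a bibracket ⟪-,-⟫ on A, define the induced tribracket on A⊗A⊗A as the sum over i = 0, 1, 2 of P₃₁₂ⁱ ∘ (⟪-,-⟫ ⊗ id_A) ∘ (id_A ⊗ ⟪-,-⟫) ∘ P₃₁₂,d⁻ⁱ, where P₃₁₂ and P₃₁₂,d are the graded and d-graded cyclic permutations of A⊗A⊗A. Suppose ⟪-,-⟫ is a Gerstenhaber bibracket of degree d, i.e., it is d-antisymmetric, satisfies the d-graded Leibniz rules, has degree d, and its induced tribracket is zero. Then the associated bracket ⟨a,b⟩ = ⟪a,b⟫'⟪a,b⟫'' satisfies, for all homogeneous a, b, c in A: ⟨⟨a,b⟩, c⟩ = ⟨a, ⟨b,c⟩⟩ - (-1)^{(|a|+d)(|b|+d)} ⟨b, ⟨a,c⟩⟩. -/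

import Mathlib

open scoped TensorProduct

noncomputable section

/-- The sign `(-1)^n`, for `n : ℤ`, as an element of the commutative ring `K`. -/
def sgn (K : Type*) [CommRing K] (n : ℤ) : K := ((n.negOnePow : ℤ) : K)

variable {K : Type*} [CommRing K] {A : Type*} [Ring A] [Algebra K A]
variable (𝒜 : ℤ → Submodule K A) [GradedAlgebra 𝒜]

/-- The `K`-linear endomorphism of `A` multiplying the degree-`p` component by `(-1)^{p·k}`. -/
def twist (k : ℤ) : A →ₗ[K] A :=
  (DirectSum.toModule K ℤ A fun p => sgn K (p * k) • (𝒜 p).subtype) ∘ₗ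
    (DirectSum.decomposeAlgEquiv 𝒜).toLinearMap

/-- The graded flip `P₂₁` of `A ⊗ A`, sending `x' ⊗ x''` (with `x', x''` homogeneous)
to `(-1)^{|x'||x''|} x'' ⊗ x'`. -/
def gflip : A ⊗[K] A →ₗ[K] A ⊗[K] A :=
  TensorProduct.lift
    ((DirectSum.toModule K ℤ (A →ₗ[K] A ⊗[K] A) fun p =>
        ((LinearMap.llcomp K A A (A ⊗[K] A)).flip (twist 𝒜 p)).comp
          ((TensorProduct.mk K A A).flip.comp (𝒜 p).subtype)) ∘ₗ
      (DirectSum.decomposeAlgEquiv 𝒜).toLinearMap)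

/-- The `d`-graded flip `P₂₁,d`, sending `a ⊗ b` (homogeneous) to
`(-1)^{(|a|+d)(|b|+d)} b ⊗ a`. -/
def P21d (d : ℤ) : A ⊗[K] A →ₗ[K] A ⊗[K] A :=
  sgn K (d * d) • (gflip 𝒜 ∘ₗ TensorProduct.map (twist 𝒜 d) (twist 𝒜 d))

/-- Outer left action of `A` on `A ⊗ A`: `a ⬝ (x' ⊗ x'') = (a x') ⊗ x''`. -/
def outL (a : A) : A ⊗[K] A →ₗ[K] A ⊗[K] A := LinearMap.rTensor A (LinearMap.mulLeft K a)

/-- Outer right action of `A` on `A ⊗ A`: `(x' ⊗ x'') ⬝ b = x' ⊗ (x'' b)`. -/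
def outR (b : A) : A ⊗[K] A →ₗ[K] A ⊗[K] A := LinearMap.lTensor A (LinearMap.mulRight K b)

/-- Inner left action of a homogeneous `a` of degree `p` on `A ⊗ A`:
`a * (x' ⊗ x'') = (-1)^{|a||x'|} x' ⊗ (a x'')`. -/
def innL (p : ℤ) (a : A) : A ⊗[K] A →ₗ[K] A ⊗[K] A :=
  (LinearMap.lTensor A (LinearMap.mulLeft K a)) ∘ₗ (LinearMap.rTensor A (twist 𝒜 p))

/-- Inner right action of a homogeneous `b` of degree `q` on `A ⊗ A`:
`(x' ⊗ x'') * b = (-1)^{|b||x''|} (x' b) ⊗ x''`. -/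
def innR (q : ℤ) (b : A) : A ⊗[K] A →ₗ[K] A ⊗[K] A :=
  (LinearMap.rTensor A (LinearMap.mulRight K b)) ∘ₗ (LinearMap.lTensor A (twist 𝒜 q))

/-- The degree-`n` part `⊕_{i+j=n} A^i ⊗ A^j` of `A ⊗ A`, as the span of
homogeneous pure tensors of total degree `n`. -/
def degSub (n : ℤ) : Submodule K (A ⊗[K] A) :=
  Submodule.span K
    {z | ∃ (i j : ℤ) (x' x'' : A), i + j = n ∧ x' ∈ 𝒜 i ∧ x'' ∈ 𝒜 j ∧ z = x' ⊗ₜ[K] x''}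

/-- `P₂₃`: graded flip of the last two factors of `A ⊗ A ⊗ A`. -/
def P23 : A ⊗[K] (A ⊗[K] A) →ₗ[K] A ⊗[K] (A ⊗[K] A) := LinearMap.lTensor A (gflip 𝒜)

/-- `P₁₂`: graded flip of the first two factors of `A ⊗ A ⊗ A`. -/
def P12 : A ⊗[K] (A ⊗[K] A) →ₗ[K] A ⊗[K] (A ⊗[K] A) :=
  (TensorProduct.assoc K A A A).toLinearMap ∘ₗ
    (LinearMap.rTensor A (gflip 𝒜)) ∘ₗ (TensorProduct.assoc K A A A).symm.toLinearMap

/-- The graded cyclic permutation `P₃₁₂ : a ⊗ b ⊗ c ↦ (-1)^{|c|(|a|+|b|)} c ⊗ a ⊗ b`. -/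
def P312 : A ⊗[K] (A ⊗[K] A) →ₗ[K] A ⊗[K] (A ⊗[K] A) := P12 𝒜 ∘ₗ P23 𝒜

/-- The `d`-graded cyclic permutation `P₃₁₂,d`, defined with the degrees `|·|+d`. -/
def P312d (d : ℤ) : A ⊗[K] (A ⊗[K] A) →ₗ[K] A ⊗[K] (A ⊗[K] A) :=
  P312 𝒜 ∘ₗ TensorProduct.map (twist 𝒜 d) (LinearMap.rTensor A (twist 𝒜 d))

/-- `F ⊗ id` on `A ⊗ (A ⊗ A)`. -/
def Fleft (F : A ⊗[K] A →ₗ[K] A ⊗[K] A) :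
    A ⊗[K] (A ⊗[K] A) →ₗ[K] A ⊗[K] (A ⊗[K] A) :=
  (TensorProduct.assoc K A A A).toLinearMap ∘ₗ
    (LinearMap.rTensor A F) ∘ₗ (TensorProduct.assoc K A A A).symm.toLinearMap

/-- The tribracket induced by a bibracket `F`:
`∑_{i=0}^{2} P₃₁₂ⁱ ∘ (F ⊗ id) ∘ (id ⊗ F) ∘ P₃₁₂,d⁻ⁱ`.  Since the `d`-graded cyclic
permutation `P₃₁₂,d` has order `3`, its inverse is its square. -/
def tribracket (d : ℤ) (F : A ⊗[K] A →ₗ[K] A ⊗[K] A) :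
    A ⊗[K] (A ⊗[K] A) →ₗ[K] A ⊗[K] (A ⊗[K] A) :=
  Fleft F ∘ₗ LinearMap.lTensor A F +
    P312 𝒜 ∘ₗ Fleft F ∘ₗ LinearMap.lTensor A F ∘ₗ (P312d 𝒜 d ∘ₗ P312d 𝒜 d) +
    (P312 𝒜 ∘ₗ P312 𝒜) ∘ₗ Fleft F ∘ₗ LinearMap.lTensor A F ∘ₗ P312d 𝒜 d

/-!
Multiplying out the vanishing tribracket on `a ⊗ b ⊗ c` and on `b ⊗ a ⊗ c` with
`x ⊗ y ⊗ z ↦ xyz` gives two identities. By the Leibniz rule in the first argument,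
`⟨⟨a,b⟩,c⟩` splits into two halves, and by the Leibniz rule in the second argument so do
`⟨a,⟨b,c⟩⟩` and `⟨b,⟨a,c⟩⟩`; after `d`-antisymmetry is used to undo the cyclic permutations,
each identity expresses one half of `⟨⟨a,b⟩,c⟩` through these pieces, and their sum is the claim.
-/

lemma sgn_mul_sgn (m n : ℤ) : sgn K m * sgn K n = sgn K (m + n) := by
  simp [sgn, Int.negOnePow_add]

lemma sgn_of_even {m : ℤ} (h : Even m) : sgn K m = 1 := by
  simp [sgn, Int.negOnePow_even _ h]

lemma sgn_mul_self (m : ℤ) : sgn K m * sgn K m = 1 := by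
  rw [sgn_mul_sgn, sgn_of_even ⟨m, rfl⟩]

lemma sgn_eq_of_even_sub {m n : ℤ} (h : Even (m - n)) : sgn K m = sgn K n := by
  rw [← sub_add_cancel m n, ← sgn_mul_sgn, sgn_of_even h, one_mul]

lemma tensor_induction_homogeneous {P : A ⊗[K] A → Prop} (zero : P 0)
    (add : ∀ x y, P x → P y → P (x + y))
    (tmul : ∀ (i j : ℤ) (x y : A), x ∈ 𝒜 i → y ∈ 𝒜 j → P (x ⊗ₜ[K] y)) (z : A ⊗[K] A) :
    P z := by
  induction z using TensorProduct.induction_on with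
  | zero => exact zero
  | add u v hu hv => exact add _ _ hu hv
  | tmul x y =>
    induction x using DirectSum.Decomposition.inductionOn 𝒜 with
    | zero => simpa using zero
    | @homogeneous i x =>
      induction y using DirectSum.Decomposition.inductionOn 𝒜 with
      | zero => simpa using zero
      | @homogeneous j y => exact tmul i j x y x.2 y.2
      | add y₁ y₂ h₁ h₂ => rw [TensorProduct.tmul_add]; exact add _ _ h₁ h₂
    | add x₁ x₂ h₁ h₂ => rw [TensorProduct.add_tmul]; exact add _ _ h₁ h₂

variable {𝒜}

lemma twist_apply_of_mem {p : ℤ} (k : ℤ) {x : A} (hx : x ∈ 𝒜 p) :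
    twist 𝒜 k x = sgn K (p * k) • x := by
  simp only [twist, LinearMap.comp_apply, AlgEquiv.toLinearMap_apply,
    DirectSum.decomposeAlgEquiv_apply, DirectSum.decompose_of_mem 𝒜 hx, ← DirectSum.lof_eq_of K,
    DirectSum.toModule_lof]
  rfl

lemma gflip_tmul_of_mem {p q : ℤ} {x y : A} (hx : x ∈ 𝒜 p) (hy : y ∈ 𝒜 q) :
    gflip 𝒜 (x ⊗ₜ[K] y) = sgn K (p * q) • (y ⊗ₜ[K] x) := by
  simp only [gflip, TensorProduct.lift.tmul, LinearMap.comp_apply, AlgEquiv.toLinearMap_apply,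
    DirectSum.decomposeAlgEquiv_apply, DirectSum.decompose_of_mem 𝒜 hx, ← DirectSum.lof_eq_of K,
    DirectSum.toModule_lof, LinearMap.flip_apply, LinearMap.llcomp_apply,
    Submodule.subtype_apply, TensorProduct.mk_apply, twist_apply_of_mem p hy]
  rw [TensorProduct.smul_tmul', mul_comm q p]

lemma gflip_gflip (z : A ⊗[K] A) : gflip 𝒜 (gflip 𝒜 z) = z := by
  induction z using tensor_induction_homogeneous 𝒜 with
  | zero => simp
  | add x y hx hy => rw [map_add, map_add, hx, hy]
  | tmul i j x y hx hy =>
    rw [gflip_tmul_of_mem hx hy, map_smul, gflip_tmul_of_mem hy hx, smul_smul, mul_comm j i,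
      sgn_mul_self, one_smul]

lemma P21d_tmul_of_mem (d : ℤ) {p q : ℤ} {x y : A} (hx : x ∈ 𝒜 p) (hy : y ∈ 𝒜 q) :
    P21d 𝒜 d (x ⊗ₜ[K] y) = sgn K ((p + d) * (q + d)) • (y ⊗ₜ[K] x) := by
  simp only [P21d, LinearMap.smul_apply, LinearMap.comp_apply, TensorProduct.map_tmul,
    twist_apply_of_mem d hx, twist_apply_of_mem d hy, TensorProduct.smul_tmul_smul,
    map_smul, gflip_tmul_of_mem hx hy, smul_smul, sgn_mul_sgn]
  congr 2
  ring

lemma P23_tmul_of_mem {i j : ℤ} (a : A) {x y : A} (hx : x ∈ 𝒜 i) (hy : y ∈ 𝒜 j) :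
    P23 𝒜 (a ⊗ₜ[K] (x ⊗ₜ[K] y)) = sgn K (i * j) • (a ⊗ₜ[K] (y ⊗ₜ[K] x)) := by
  simp [P23, gflip_tmul_of_mem hx hy, TensorProduct.tmul_smul]

lemma P12_tmul_of_mem {p i : ℤ} {a x : A} (ha : a ∈ 𝒜 p) (hx : x ∈ 𝒜 i) (y : A) :
    P12 𝒜 (a ⊗ₜ[K] (x ⊗ₜ[K] y)) = sgn K (p * i) • (x ⊗ₜ[K] (a ⊗ₜ[K] y)) := by
  simp only [P12, LinearMap.comp_apply, LinearEquiv.coe_coe, TensorProduct.assoc_symm_tmul,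
    LinearMap.rTensor_tmul, gflip_tmul_of_mem ha hx, ← TensorProduct.smul_tmul', map_smul,
    TensorProduct.assoc_tmul]

lemma P312_tmul_of_mem {p q r : ℤ} {x y z : A} (hx : x ∈ 𝒜 p) (hy : y ∈ 𝒜 q) (hz : z ∈ 𝒜 r) :
    P312 𝒜 (x ⊗ₜ[K] (y ⊗ₜ[K] z)) = sgn K (r * (p + q)) • (z ⊗ₜ[K] (x ⊗ₜ[K] y)) := by
  rw [P312, LinearMap.comp_apply, P23_tmul_of_mem x hy hz, map_smul,
    P12_tmul_of_mem hx hz y, smul_smul, sgn_mul_sgn]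
  congr 2
  ring

lemma P312d_tmul_of_mem (d : ℤ) {p q r : ℤ} {x y z : A} (hx : x ∈ 𝒜 p) (hy : y ∈ 𝒜 q)
    (hz : z ∈ 𝒜 r) :
    P312d 𝒜 d (x ⊗ₜ[K] (y ⊗ₜ[K] z)) = sgn K ((r + d) * (p + q)) • (z ⊗ₜ[K] (x ⊗ₜ[K] y)) := by
  simp only [P312d, LinearMap.comp_apply, TensorProduct.map_tmul, LinearMap.rTensor_tmul,
    twist_apply_of_mem d hx, twist_apply_of_mem d hy, ← TensorProduct.smul_tmul',
    TensorProduct.tmul_smul, map_smul, P312_tmul_of_mem hx hy hz, smul_smul, sgn_mul_sgn]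
  congr 2
  ring

local notation "μ" => LinearMap.mul' K A

def tripleMul : A ⊗[K] (A ⊗[K] A) →ₗ[K] A := μ ∘ₗ LinearMap.lTensor A μ

@[simp]
lemma tripleMul_tmul (x y z : A) : tripleMul (x ⊗ₜ[K] (y ⊗ₜ[K] z)) = x * (y * z) := by
  simp [tripleMul]

lemma tripleMul_assoc_tmul (X : A ⊗[K] A) (w : A) :
    tripleMul (TensorProduct.assoc K A A A (X ⊗ₜ[K] w)) = μ X * w := by
  induction X using TensorProduct.induction_on with
  | zero => simp
  | tmul x y => simp [mul_assoc]
  | add u v hu hv => rw [TensorProduct.add_tmul, map_add, map_add, hu, hv, map_add, add_mul]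

lemma mul'_outL (a : A) (z : A ⊗[K] A) : μ (outL a z) = a * μ z := by
  induction z using TensorProduct.induction_on with
  | zero => simp
  | tmul x y => simp [outL, mul_assoc]
  | add u v hu hv => rw [map_add, map_add, hu, hv, map_add, mul_add]

lemma mul'_outR (b : A) (z : A ⊗[K] A) : μ (outR b z) = μ z * b := by
  induction z using TensorProduct.induction_on with
  | zero => simp
  | tmul x y => simp [outR, mul_assoc]
  | add u v hu hv => rw [map_add, map_add, hu, hv, map_add, add_mul]

lemma mul'_innL {ρ : ℤ} {r : A} (hr : r ∈ 𝒜 ρ) (z : A ⊗[K] A) :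
    μ (innL 𝒜 ρ r z) = tripleMul (P12 𝒜 (r ⊗ₜ[K] z)) := by
  induction z using tensor_induction_homogeneous 𝒜 with
  | zero => simp
  | add x y hx hy => simp only [map_add, TensorProduct.tmul_add, hx, hy]
  | tmul i j x y hx hy =>
    simp only [innL, LinearMap.comp_apply, LinearMap.rTensor_tmul, twist_apply_of_mem ρ hx,
      P12_tmul_of_mem hr hx y, ← TensorProduct.smul_tmul', map_smul, LinearMap.lTensor_tmul,
      LinearMap.mul'_apply, LinearMap.mulLeft_apply, tripleMul_tmul, mul_comm i ρ]

lemma mul'_innR {ω : ℤ} {w : A} (hw : w ∈ 𝒜 ω) {m : ℤ} {z : A ⊗[K] A} (hz : z ∈ degSub 𝒜 m) :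
    μ (innR 𝒜 ω w z) = sgn K (ω * m) • tripleMul (P12 𝒜 (w ⊗ₜ[K] z)) := by
  induction hz using Submodule.span_induction with
  | mem z hz =>
    obtain ⟨i, j, x, y, rfl, hx, hy, rfl⟩ := hz
    simp only [innR, LinearMap.comp_apply, LinearMap.lTensor_tmul, twist_apply_of_mem ω hy,
      TensorProduct.tmul_smul, map_smul, LinearMap.rTensor_tmul, P12_tmul_of_mem hw hx y,
      tripleMul_tmul, LinearMap.mul'_apply, LinearMap.mulRight_apply, smul_smul, sgn_mul_sgn,
      mul_assoc]
    exact congrArg (· • _) (sgn_eq_of_even_sub ⟨-(ω * i), by ring⟩)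
  | zero => simp
  | add x y _ _ hx hy => simp only [map_add, TensorProduct.tmul_add, hx, hy, smul_add]
  | smul r x _ hx => simp only [map_smul, TensorProduct.tmul_smul, hx, smul_comm r]

lemma tripleMul_P312_assoc_tmul {τ : ℤ} {t : A} (ht : t ∈ 𝒜 τ) {m : ℤ} {X : A ⊗[K] A}
    (hX : X ∈ degSub 𝒜 m) :
    tripleMul (P312 𝒜 (TensorProduct.assoc K A A A (X ⊗ₜ[K] t))) = sgn K (τ * m) • (t * μ X) := by
  induction hX using Submodule.span_induction with
  | mem X hX =>
    obtain ⟨i, j, x, y, rfl, hx, hy, rfl⟩ := hX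
    simp [P312_tmul_of_mem hx hy ht]
  | zero => simp
  | add x y _ _ hx hy => simp only [TensorProduct.add_tmul, map_add, hx, hy, mul_add, smul_add]
  | smul r x _ hx =>
    simp only [← TensorProduct.smul_tmul', map_smul, hx, mul_smul_comm, smul_comm r]

lemma tripleMul_P312_P312_assoc_gflip_tmul {ω : ℤ} {w : A} (hw : w ∈ 𝒜 ω) {m : ℤ}
    {v : A ⊗[K] A} (hv : v ∈ degSub 𝒜 m) :
    tripleMul (P312 𝒜 (P312 𝒜 (TensorProduct.assoc K A A A (gflip 𝒜 v ⊗ₜ[K] w)))) =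
      sgn K (ω * m) • tripleMul (P12 𝒜 (w ⊗ₜ[K] v)) := by
  induction hv using Submodule.span_induction with
  | mem v hv =>
    obtain ⟨i, j, x, y, rfl, hx, hy, rfl⟩ := hv
    simp only [gflip_tmul_of_mem hx hy, ← TensorProduct.smul_tmul', map_smul,
      TensorProduct.assoc_tmul, P312_tmul_of_mem hy hx hw, P312_tmul_of_mem hw hy hx,
      P12_tmul_of_mem hw hx y, tripleMul_tmul, smul_smul, sgn_mul_sgn]
    exact congrArg (· • _) (sgn_eq_of_even_sub ⟨i * j, by ring⟩)
  | zero => simp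
  | add x y _ _ hx hy =>
    simp only [map_add, TensorProduct.add_tmul, TensorProduct.tmul_add, hx, hy, smul_add]
  | smul r x _ hx =>
    simp only [map_smul, ← TensorProduct.smul_tmul', TensorProduct.tmul_smul, hx, smul_comm r]

def bracket (F : A ⊗[K] A →ₗ[K] A ⊗[K] A) (a : A) : A →ₗ[K] A :=
  μ ∘ₗ F ∘ₗ TensorProduct.mk K A A a

lemma bracket_apply (F : A ⊗[K] A →ₗ[K] A ⊗[K] A) (a u : A) :
    bracket F a u = μ (F (a ⊗ₜ[K] u)) := rfl

lemma Fleft_tmul (F : A ⊗[K] A →ₗ[K] A ⊗[K] A) (a u v : A) :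
    Fleft F (a ⊗ₜ[K] (u ⊗ₜ[K] v)) = TensorProduct.assoc K A A A (F (a ⊗ₜ[K] u) ⊗ₜ[K] v) := by
  simp [Fleft]

variable (𝒜) in
def HasDegree (d : ℤ) (F : A ⊗[K] A →ₗ[K] A ⊗[K] A) : Prop :=
  ∀ (p q : ℤ) (a b : A), a ∈ 𝒜 p → b ∈ 𝒜 q → F (a ⊗ₜ[K] b) ∈ degSub 𝒜 (p + q + d)

variable (𝒜) in
/-- `x ⊗ y ↦ μ (x * ⟪y, c⟫)` for homogeneous `x`, where `*` is the inner action. -/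
def mulInnerBracket (F : A ⊗[K] A →ₗ[K] A ⊗[K] A) (c : A) : A ⊗[K] A →ₗ[K] A :=
  tripleMul ∘ₗ P12 𝒜 ∘ₗ LinearMap.lTensor A (F ∘ₗ (TensorProduct.mk K A A).flip c)

lemma mulInnerBracket_tmul (F : A ⊗[K] A →ₗ[K] A ⊗[K] A) (c x y : A) :
    mulInnerBracket 𝒜 F c (x ⊗ₜ[K] y) = tripleMul (P12 𝒜 (x ⊗ₜ[K] F (y ⊗ₜ[K] c))) := rfl

section Bibracket

variable {d : ℤ} {F : A ⊗[K] A →ₗ[K] A ⊗[K] A}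

lemma apply_tmul_swap_of_antisymm (hanti : gflip 𝒜 ∘ₗ F ∘ₗ P21d 𝒜 d = -F) {p q : ℤ} {x y : A}
    (hx : x ∈ 𝒜 p) (hy : y ∈ 𝒜 q) :
    F (y ⊗ₜ[K] x) = -(sgn K ((p + d) * (q + d)) • gflip 𝒜 (F (x ⊗ₜ[K] y))) := by
  have h := LinearMap.congr_fun hanti (x ⊗ₜ[K] y)
  simp only [LinearMap.comp_apply, LinearMap.neg_apply, P21d_tmul_of_mem d hx hy,
    map_smul] at h
  calc F (y ⊗ₜ[K] x)
      = sgn K ((p + d) * (q + d)) • gflip 𝒜 (sgn K ((p + d) * (q + d)) •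
          gflip 𝒜 (F (y ⊗ₜ[K] x))) := by
        rw [map_smul, gflip_gflip, smul_smul, sgn_mul_self, one_smul]
    _ = _ := by rw [h, map_neg, smul_neg]

lemma tripleMul_Fleft_tmul (a : A) (z : A ⊗[K] A) :
    tripleMul (Fleft F (a ⊗ₜ[K] z)) = μ (LinearMap.rTensor A (bracket F a) z) := by
  induction z using TensorProduct.induction_on with
  | zero => simp
  | tmul u v => rw [Fleft_tmul, tripleMul_assoc_tmul, LinearMap.rTensor_tmul,
      LinearMap.mul'_apply, bracket_apply]
  | add u v hu hv => simp only [TensorProduct.tmul_add, map_add, hu, hv]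

lemma tripleMul_P312_Fleft_tmul
    (hdeg : HasDegree 𝒜 d F)
    {pb : ℤ} {b : A} (hb : b ∈ 𝒜 pb) (z : A ⊗[K] A) :
    tripleMul (P312 𝒜 (Fleft F (b ⊗ₜ[K] z))) =
      μ (LinearMap.lTensor A (bracket F b)
        (LinearMap.rTensor A (twist 𝒜 (pb + d)) (gflip 𝒜 z))) := by
  induction z using tensor_induction_homogeneous 𝒜 with
  | zero => simp
  | add x y hx hy => simp only [TensorProduct.tmul_add, map_add, hx, hy]
  | tmul σ τ s t hs ht =>
    simp only [Fleft_tmul, tripleMul_P312_assoc_tmul ht (hdeg pb σ b s hb hs),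
      gflip_tmul_of_mem hs ht, map_smul, LinearMap.rTensor_tmul, twist_apply_of_mem _ ht,
      ← TensorProduct.smul_tmul', LinearMap.lTensor_tmul, LinearMap.mul'_apply, bracket_apply,
      smul_smul, sgn_mul_sgn]
    congr 2
    ring

lemma tripleMul_P312_P312_Fleft_tmul
    (hdeg : HasDegree 𝒜 d F)
    (hanti : gflip 𝒜 ∘ₗ F ∘ₗ P21d 𝒜 d = -F)
    {pc : ℤ} {c : A} (hc : c ∈ 𝒜 pc) {n : ℤ} {z : A ⊗[K] A} (hz : z ∈ degSub 𝒜 n) :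
    tripleMul (P312 𝒜 (P312 𝒜 (Fleft F (c ⊗ₜ[K] z)))) =
      -(sgn K ((pc + d) * (n - d)) • mulInnerBracket 𝒜 F c (gflip 𝒜 z)) := by
  induction hz using Submodule.span_induction with
  | mem z hz =>
    obtain ⟨ρ, ω, r, w, rfl, hr, hw, rfl⟩ := hz
    simp only [Fleft_tmul, apply_tmul_swap_of_antisymm hanti hr hc, TensorProduct.neg_tmul,
      ← TensorProduct.smul_tmul', map_neg, map_smul,
      tripleMul_P312_P312_assoc_gflip_tmul hw (hdeg ρ pc r c hr hc),
      gflip_tmul_of_mem hr hw, mulInnerBracket_tmul, smul_smul, sgn_mul_sgn]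
    exact congrArg (-(· • _)) (sgn_eq_of_even_sub ⟨d * d + pc * d, by ring⟩)
  | zero => simp
  | add x y _ _ hx hy => simp only [TensorProduct.tmul_add, map_add, hx, hy, smul_add, neg_add]
  | smul r x _ hx => simp only [TensorProduct.tmul_smul, map_smul, hx, smul_neg, smul_comm r]

lemma tripleMul_tribracket_tmul
    (hdeg : HasDegree 𝒜 d F)
    (hanti : gflip 𝒜 ∘ₗ F ∘ₗ P21d 𝒜 d = -F)
    {pa pb pc : ℤ} {a b c : A} (ha : a ∈ 𝒜 pa) (hb : b ∈ 𝒜 pb) (hc : c ∈ 𝒜 pc) :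
    tripleMul (tribracket 𝒜 d F (a ⊗ₜ[K] (b ⊗ₜ[K] c))) =
      μ (LinearMap.rTensor A (bracket F a) (F (b ⊗ₜ[K] c))) -
        sgn K ((pa + d) * (pb + d)) • μ (LinearMap.lTensor A (bracket F b)
          (LinearMap.rTensor A (twist 𝒜 (pb + d)) (F (a ⊗ₜ[K] c)))) -
        mulInnerBracket 𝒜 F c (gflip 𝒜 (F (a ⊗ₜ[K] b))) := by
  simp only [tribracket, LinearMap.add_apply, LinearMap.comp_apply, map_add, map_smul,
    P312d_tmul_of_mem d ha hb hc, P312d_tmul_of_mem d hc ha hb, LinearMap.lTensor_tmul,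
    tripleMul_Fleft_tmul, tripleMul_P312_Fleft_tmul hdeg hb,
    tripleMul_P312_P312_Fleft_tmul hdeg hanti hc (hdeg pa pb a b ha hb),
    apply_tmul_swap_of_antisymm hanti ha hc, map_neg, gflip_gflip, smul_neg, smul_smul, sgn_mul_sgn]
  have hs₁ : sgn K ((pc + d) * (pa + pb) + (pb + d) * (pc + pa) + (pa + d) * (pc + d)) =
      sgn K ((pa + d) * (pb + d)) :=
    sgn_eq_of_even_sub ⟨pa * pc + pa * d + pb * pc + pc * d, by ring⟩
  have hs₂ : sgn K ((pc + d) * (pa + pb) + (pc + d) * (pa + pb + d - d)) = 1 :=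
    sgn_of_even ⟨(pc + d) * (pa + pb), by ring⟩
  rw [hs₁, hs₂, one_smul, ← sub_eq_add_neg, ← sub_eq_add_neg]

lemma mul'_leibniz_right
    (hL1 : ∀ (pa pb : ℤ) (a b c : A), a ∈ 𝒜 pa → b ∈ 𝒜 pb →
      F (a ⊗ₜ[K] (b * c)) =
        outR c (F (a ⊗ₜ[K] b)) + sgn K ((pa + d) * pb) • outL b (F (a ⊗ₜ[K] c)))
    {pa : ℤ} {a : A} (ha : a ∈ 𝒜 pa) (z : A ⊗[K] A) :
    μ (F (a ⊗ₜ[K] μ z)) =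
      μ (LinearMap.rTensor A (bracket F a) z) +
        μ (LinearMap.lTensor A (bracket F a) (LinearMap.rTensor A (twist 𝒜 (pa + d)) z)) := by
  induction z using tensor_induction_homogeneous 𝒜 with
  | zero => simp
  | add x y hx hy =>
    simp only [map_add, TensorProduct.tmul_add, hx, hy]
    abel
  | tmul i j u v hu hv =>
    simp only [LinearMap.mul'_apply, hL1 pa i a u v ha hu, map_add, map_smul, mul'_outR,
      mul'_outL, LinearMap.rTensor_tmul, bracket_apply, twist_apply_of_mem _ hu,
      ← TensorProduct.smul_tmul', LinearMap.lTensor_tmul, mul_comm (pa + d) i]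

lemma mul'_leibniz_left
    (hdeg : HasDegree 𝒜 d F)
    (hL2 : ∀ (pa pb pc : ℤ) (a b c : A), a ∈ 𝒜 pa → b ∈ 𝒜 pb → c ∈ 𝒜 pc →
      F ((a * b) ⊗ₜ[K] c) =
        innL 𝒜 pa a (F (b ⊗ₜ[K] c)) + sgn K (pb * (pc + d)) • innR 𝒜 pb b (F (a ⊗ₜ[K] c)))
    {pc : ℤ} {c : A} (hc : c ∈ 𝒜 pc) (z : A ⊗[K] A) :
    μ (F (μ z ⊗ₜ[K] c)) =
      mulInnerBracket 𝒜 F c z + mulInnerBracket 𝒜 F c (gflip 𝒜 z) := by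
  induction z using tensor_induction_homogeneous 𝒜 with
  | zero => simp
  | add x y hx hy =>
    simp only [map_add, TensorProduct.add_tmul, hx, hy]
    abel
  | tmul ρ ω r w hr hw =>
    simp only [LinearMap.mul'_apply, hL2 ρ ω pc r w c hr hw hc, map_add, map_smul,
      mul'_innL hr, mul'_innR hw (hdeg ρ pc r c hr hc), gflip_tmul_of_mem hr hw,
      mulInnerBracket_tmul, smul_smul, sgn_mul_sgn]
    congr 2
    exact sgn_eq_of_even_sub ⟨ω * (pc + d), by ring⟩

end Bibracket

/-- for a Gerstenhaber bibracket of degree `d` (a `d`-antisymmetric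
`d`-graded bibracket of degree `d` with vanishing induced tribracket), the associated
bracket satisfies `⟨⟨a,b⟩,c⟩ = ⟨a,⟨b,c⟩⟩ - (-1)^{(|a|+d)(|b|+d)} ⟨b,⟨a,c⟩⟩`. -/
theorem stmt18 (d : ℤ) (F : A ⊗[K] A →ₗ[K] A ⊗[K] A)
    (hdeg : ∀ (p q : ℤ) (a b : A), a ∈ 𝒜 p → b ∈ 𝒜 q →
      F (a ⊗ₜ[K] b) ∈ degSub 𝒜 (p + q + d))
    (hL1 : ∀ (pa pb : ℤ) (a b c : A), a ∈ 𝒜 pa → b ∈ 𝒜 pb →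
      F (a ⊗ₜ[K] (b * c)) =
        outR c (F (a ⊗ₜ[K] b)) + sgn K ((pa + d) * pb) • outL b (F (a ⊗ₜ[K] c)))
    (hL2 : ∀ (pa pb pc : ℤ) (a b c : A), a ∈ 𝒜 pa → b ∈ 𝒜 pb → c ∈ 𝒜 pc →
      F ((a * b) ⊗ₜ[K] c) =
        innL 𝒜 pa a (F (b ⊗ₜ[K] c)) +
          sgn K (pb * (pc + d)) • innR 𝒜 pb b (F (a ⊗ₜ[K] c)))
    (hanti : gflip 𝒜 ∘ₗ F ∘ₗ P21d 𝒜 d = -F)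
    (htri : tribracket 𝒜 d F = 0) :
    ∀ (pa pb pc : ℤ) (a b c : A), a ∈ 𝒜 pa → b ∈ 𝒜 pb → c ∈ 𝒜 pc →
      LinearMap.mul' K A (F ((LinearMap.mul' K A (F (a ⊗ₜ[K] b))) ⊗ₜ[K] c)) =
        LinearMap.mul' K A (F (a ⊗ₜ[K] (LinearMap.mul' K A (F (b ⊗ₜ[K] c))))) -
          sgn K ((pa + d) * (pb + d)) •
            LinearMap.mul' K A (F (b ⊗ₜ[K] (LinearMap.mul' K A (F (a ⊗ₜ[K] c))))) := by
  intro pa pb pc a b c ha hb hc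
  have habc := tripleMul_tribracket_tmul hdeg hanti ha hb hc
  have hbac := tripleMul_tribracket_tmul hdeg hanti hb ha hc
  rw [htri, LinearMap.zero_apply, map_zero] at habc hbac
  simp only [apply_tmul_swap_of_antisymm hanti ha hb, map_neg, map_smul, gflip_gflip,
    mul_comm (pb + d)] at hbac
  rw [mul'_leibniz_left hdeg hL2 hc, mul'_leibniz_right hL1 ha, mul'_leibniz_right hL1 hb]
  linear_combination (norm := skip) habc - sgn K ((pa + d) * (pb + d)) • hbac
  simp only [smul_sub, smul_add, smul_neg, smul_smul, sgn_mul_self, one_smul, smul_zero]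
  abel
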